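/- Let p be a prime, P a finite p-group, and W = Ω₁(Z(P)) the subgroup generated by the central elements of order p. Let X be a nontrivial elementary abelian subgroup of P with W not contained in X. Then XW is an elementary abelian subgroup strictly containing X, and for every elementary abelian subgroup B of P with X < B, the subgroup BW is elementary abelian and is the smallest subgroup of P containing both B and XW; in particular XW is a conjunctive element of the poset of elementary abelian subgroups of P strictly containing X. -/

import Mathlib

/-!
`W` is generated by central elements of order `p`, so it is an elementary abelian subgroup
commuting elementwise with every subgroup. The join of two elementwise commuting elementary
abelian subgroups is elementary abelian, being generated by pairwise commuting elements of
exponent `p`. Hence `B ⊔ W` is elementary abelian for every elementary abelian `B`, and it is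
then the join of `B` and `X ⊔ W` inside the poset of elementary abelian subgroups.
-/

/-- A subgroup is elementary abelian for the prime `p` if it is abelian and
every element satisfies `a ^ p = 1`. -/
def IsElementaryAbelian (p : ℕ) {G : Type*} [Group G] (A : Subgroup G) : Prop :=
  (∀ a ∈ A, ∀ b ∈ A, Commute a b) ∧ ∀ a ∈ A, a ^ p = 1

namespace IsElementaryAbelian

variable {p : ℕ} {G : Type*} [Group G]

theorem closure {S : Set G} (hcomm : ∀ x ∈ S, ∀ y ∈ S, Commute x y)
    (hpow : ∀ x ∈ S, x ^ p = 1) : IsElementaryAbelian p (Subgroup.closure S) := by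
  have := Subgroup.isMulCommutative_closure hcomm
  have hcomm' : ∀ x ∈ Subgroup.closure S, ∀ y ∈ Subgroup.closure S, Commute x y :=
    fun _ hx _ hy => setLike_mul_comm hx hy
  refine ⟨hcomm', fun x hx => ?_⟩
  induction hx using Subgroup.closure_induction with
  | mem x hx => exact hpow x hx
  | one => exact one_pow p
  | mul x y hx hy ihx ihy => rw [(hcomm' x hx y hy).mul_pow, ihx, ihy, one_mul]
  | inv x _ ih => rw [inv_pow, ih, inv_one]

theorem sup {A B : Subgroup G} (hA : IsElementaryAbelian p A) (hB : IsElementaryAbelian p B)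
    (hAB : ∀ a ∈ A, ∀ b ∈ B, Commute a b) : IsElementaryAbelian p (A ⊔ B) := by
  rw [← A.closure_eq, ← B.closure_eq, ← Subgroup.closure_union]
  refine closure ?_ fun x hx => hx.elim (hA.2 x) (hB.2 x)
  rintro x (hx | hx) y (hy | hy)
  exacts [hA.1 x hx y hy, hAB x hx y hy, (hAB y hy x hx).symm, hB.1 x hx y hy]

theorem sup_of_le_center {A W : Subgroup G} (hA : IsElementaryAbelian p A)
    (hW : IsElementaryAbelian p W) (hWcenter : W ≤ Subgroup.center G) :
    IsElementaryAbelian p (A ⊔ W) :=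
  hA.sup hW fun a _ _ hw => Subgroup.mem_center_iff.1 (hWcenter hw) a

end IsElementaryAbelian

theorem isElementaryAbelian_closure_central_orderOf (G : Type*) [Group G] (p : ℕ) :
    IsElementaryAbelian p
      (Subgroup.closure {x : G | x ∈ Subgroup.center G ∧ orderOf x = p}) :=
  .closure (fun _ hx y _ => (Subgroup.mem_center_iff.1 hx.1 y).symm)
    fun x hx => hx.2 ▸ pow_orderOf_eq_one x

theorem omega_center_join_conjunctive_general
    (p : ℕ) (P : Type*) [Group P]
    (W : Subgroup P)
    (hW : W = Subgroup.closure {x : P | x ∈ Subgroup.center P ∧ orderOf x = p})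
    (X : Subgroup P) (hX : IsElementaryAbelian p X)
    (hWX : ¬ W ≤ X) :
    (IsElementaryAbelian p (X ⊔ W) ∧ X < X ⊔ W) ∧
    (∀ B : Subgroup P, IsElementaryAbelian p B → X < B →
      IsElementaryAbelian p (B ⊔ W) ∧ B ≤ B ⊔ W ∧ X ⊔ W ≤ B ⊔ W ∧
        ∀ C : Subgroup P, B ≤ C → X ⊔ W ≤ C → B ⊔ W ≤ C) ∧
    (∀ B : Subgroup P, IsElementaryAbelian p B → X < B →
      ∃ S : Subgroup P, IsElementaryAbelian p S ∧ X < S ∧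
        X ⊔ W ≤ S ∧ B ≤ S ∧
        ∀ C : Subgroup P, IsElementaryAbelian p C → X < C →
          X ⊔ W ≤ C → B ≤ C → S ≤ C) := by
  have join_W {B : Subgroup P} (hB : IsElementaryAbelian p B) : IsElementaryAbelian p (B ⊔ W) :=
    hB.sup_of_le_center (hW ▸ isElementaryAbelian_closure_central_orderOf P p)
      (hW ▸ (Subgroup.closure_le _).2 fun _ hx => hx.1)
  have join_le {B C : Subgroup P} (hBC : B ≤ C) (hXWC : X ⊔ W ≤ C) : B ⊔ W ≤ C :=
    sup_le hBC (le_sup_right.trans hXWC)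
  refine ⟨⟨join_W hX, left_lt_sup.2 hWX⟩, fun B hB hXB => ?_, fun B hB hXB => ?_⟩
  · exact ⟨join_W hB, le_sup_left, sup_le_sup_right hXB.le W, fun C => join_le⟩
  · exact ⟨B ⊔ W, join_W hB, hXB.trans_le le_sup_left, sup_le_sup_right hXB.le W, le_sup_left,
      fun C _ _ hXWC hBC => join_le hBC hXWC⟩

theorem omega_center_join_conjunctive
    (p : ℕ) (hp : p.Prime) (P : Type*) [Group P] [Finite P]
    (hPp : IsPGroup p P)
    (W : Subgroup P)
    (hW : W = Subgroup.closure {x : P | x ∈ Subgroup.center P ∧ orderOf x = p})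
    (X : Subgroup P) (hX : IsElementaryAbelian p X) (hXne : X ≠ ⊥)
    (hWX : ¬ W ≤ X) :
    (IsElementaryAbelian p (X ⊔ W) ∧ X < X ⊔ W) ∧
    (∀ B : Subgroup P, IsElementaryAbelian p B → X < B →
      IsElementaryAbelian p (B ⊔ W) ∧ B ≤ B ⊔ W ∧ X ⊔ W ≤ B ⊔ W ∧
        ∀ C : Subgroup P, B ≤ C → X ⊔ W ≤ C → B ⊔ W ≤ C) ∧
    (∀ B : Subgroup P, IsElementaryAbelian p B → X < B →
      ∃ S : Subgroup P, IsElementaryAbelian p S ∧ X < S ∧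
        X ⊔ W ≤ S ∧ B ≤ S ∧
        ∀ C : Subgroup P, IsElementaryAbelian p C → X < C →
          X ⊔ W ≤ C → B ≤ C → S ≤ C) :=
  omega_center_join_conjunctive_general p P W hW X hX hWX
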